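/- Every thickly syndetic subset of ℤ₊ containing 0 contains an sm-set; that is, for every thickly syndetic set F ⊆ ℤ₊ with 0 ∈ F there exist a minimal topological dynamical system (Y,S), a point y ∈ Y and an open neighborhood V of y such that N(y,V) ⊆ F. -/

import Mathlib

open Set Filter Topology Function

namespace PaperFormal

/-- The return-time set `N(x,U) = {n ∈ ℤ₊ : Tⁿ x ∈ U}`. -/
def retTimes {X : Type} (T : X → X) (x : X) (U : Set X) : Set ℕ :=
  {n : ℕ | T^[n] x ∈ U}

/-- A point is recurrent if `N(x,U)` is infinite for every neighborhood `U` of `x`. -/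
def RecurrentPt {X : Type} [TopologicalSpace X] (T : X → X) (x : X) : Prop :=
  ∀ U ∈ nhds x, (retTimes T x U).Infinite

/-- The (forward) orbit closure of a point. -/
def orbitClosure {X : Type} [TopologicalSpace X] (T : X → X) (x : X) : Set X :=
  closure (Set.range fun n : ℕ => T^[n] x)

/-- A pair `(x,y)` is proximal if `lim T^{nᵢ} x = lim T^{nᵢ} y` along some sequence `nᵢ`. -/
def ProximalPair {X : Type} [TopologicalSpace X] (T : X → X) (x y : X) : Prop :=
  ∃ (u : ℕ → ℕ) (z : X),
    Tendsto (fun i => T^[u i] x) atTop (nhds z) ∧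
    Tendsto (fun i => T^[u i] y) atTop (nhds z)

/-- A point `x` is distal if every `y` in its orbit closure proximal to `x` equals `x`. -/
def DistalPt {X : Type} [TopologicalSpace X] (T : X → X) (x : X) : Prop :=
  ∀ y ∈ orbitClosure T x, ProximalPair T x y → y = x

/-- `A` is a minimal set: nonempty, closed, invariant, with no proper such subset. -/
def IsMinimalSet {X : Type} [TopologicalSpace X] (T : X → X) (A : Set X) : Prop :=
  A.Nonempty ∧ IsClosed A ∧ Set.MapsTo T A A ∧
    ∀ B ⊆ A, B.Nonempty → IsClosed B → Set.MapsTo T B B → B = A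

/-- A point is minimal (almost periodic) if its orbit closure is a minimal set. -/
def IsMinimalPt {X : Type} [TopologicalSpace X] (T : X → X) (x : X) : Prop :=
  IsMinimalSet T (orbitClosure T x)

/-- A minimal system: no proper nonempty closed invariant subset. -/
def MinimalSys {X : Type} [TopologicalSpace X] (T : X → X) : Prop :=
  ∀ B : Set X, B.Nonempty → IsClosed B → Set.MapsTo T B B → B = Set.univ

/-- A transitive system: `N(U,V)` is infinite for all opene `U`, `V`. -/
def TransitiveSys {X : Type} [TopologicalSpace X] (T : X → X) : Prop :=
  ∀ U V : Set X, IsOpen U → IsOpen V → U.Nonempty → V.Nonempty →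
    {n : ℕ | (U ∩ T^[n] ⁻¹' V).Nonempty}.Infinite

/-- Transitivity of the subsystem on an invariant subset `A` (relative open sets). -/
def TransitiveOn {X : Type} [TopologicalSpace X] (T : X → X) (A : Set X) : Prop :=
  ∀ U V : Set X, IsOpen U → IsOpen V → (U ∩ A).Nonempty → (V ∩ A).Nonempty →
    {n : ℕ | (U ∩ A ∩ T^[n] ⁻¹' V).Nonempty}.Infinite

/-- A transitive point: a point with dense forward orbit. -/
def TransPt {X : Type} [TopologicalSpace X] (T : X → X) (x : X) : Prop :=
  Dense (Set.range fun n : ℕ => T^[n] x)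

/-- Finite sums of the sequence `p` over nonempty finite index sets contained in `[n,∞)`. -/
def FSfrom (p : ℕ → ℕ) (n : ℕ) : Set ℕ :=
  {m | ∃ α : Finset ℕ, α.Nonempty ∧ (∀ i ∈ α, n ≤ i) ∧ m = ∑ i ∈ α, p i}

/-- Finite sums of the sequence `p` over nonempty finite index sets. -/
def FS (p : ℕ → ℕ) : Set ℕ := FSfrom p 0

/-- An IP set: a set containing all finite sums of some sequence of natural numbers. -/
def IPSet (A : Set ℕ) : Prop :=
  ∃ p : ℕ → ℕ, (∀ i, 0 < p i) ∧ FS p ⊆ A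

/-- An IP* set: a set meeting every IP set. -/
def IPStar (A : Set ℕ) : Prop :=
  ∀ B : Set ℕ, IPSet B → (A ∩ B).Nonempty

/-- A syndetic set: a set with bounded gaps. -/
def Syndetic (S : Set ℕ) : Prop :=
  ∃ N : ℕ, ∀ m : ℕ, ∃ k ∈ S, m ≤ k ∧ k ≤ m + N

/-- A thick set: a set containing arbitrarily long runs of consecutive integers. -/
def Thick (S : Set ℕ) : Prop :=
  ∀ n : ℕ, ∃ m : ℕ, ∀ i ≤ n, m + i ∈ S

/-- A piecewise syndetic set: an intersection of a syndetic set with a thick set. -/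
def PiecewiseSyndetic (A : Set ℕ) : Prop :=
  ∃ S₁ S₂ : Set ℕ, Syndetic S₁ ∧ Thick S₂ ∧ A = S₁ ∩ S₂

/-- A thickly syndetic set: a set meeting every piecewise syndetic set. -/
def ThicklySyndetic (A : Set ℕ) : Prop :=
  ∀ B : Set ℕ, PiecewiseSyndetic B → (A ∩ B).Nonempty

/-- `x` is `F`-recurrent for the family `F` if `N(x,U) ∈ F` for every neighborhood `U`. -/
def FRecurrentPt {X : Type} [TopologicalSpace X] (F : Set (Set ℕ)) (T : X → X) (x : X) :
    Prop :=
  ∀ U ∈ nhds x, retTimes T x U ∈ F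

/-- `x` is `F`-product recurrent: `(x,y)` is recurrent for every `F`-recurrent point `y`
in any topological dynamical system `(Y,S)`. -/
def FProductRecurrent {X : Type} [TopologicalSpace X] (F : Set (Set ℕ)) (T : X → X)
    (x : X) : Prop :=
  ∀ (Y : Type) [MetricSpace Y] [CompactSpace Y] (S : Y → Y),
    Continuous S → Function.Surjective S →
      ∀ y : Y, FRecurrentPt F S y → RecurrentPt (Prod.map T S) (x, y)

/-- A joining of `(X,T)` and `(Y,S)`: a nonempty closed invariant subset of `X × Y`
projecting onto both coordinates. -/
def Joining {X Y : Type} [TopologicalSpace X] [TopologicalSpace Y]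
    (T : X → X) (S : Y → Y) (J : Set (X × Y)) : Prop :=
  J.Nonempty ∧ IsClosed J ∧ Set.MapsTo (Prod.map T S) J J ∧
    Prod.fst '' J = Set.univ ∧ Prod.snd '' J = Set.univ

/-- Two systems are disjoint if their only joining is the full product. -/
def DisjointSys {X Y : Type} [TopologicalSpace X] [TopologicalSpace Y]
    (T : X → X) (S : Y → Y) : Prop :=
  ∀ J : Set (X × Y), Joining T S J → J = Set.univ

/-- Property (★) of a point: for each neighborhood `V` of `x` there is `n` such that for
every finite set `S` whose distinct elements are at distance `≥ n`, some common shift `ℓ`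
puts all of `T^{s+ℓ} x`, `s ∈ S`, inside `V`. -/
def StarProp {X : Type} [TopologicalSpace X] (T : X → X) (x : X) : Prop :=
  ∀ V ∈ nhds x, ∃ n : ℕ, ∀ S : Finset ℕ,
    (∀ s ∈ S, ∀ t ∈ S, s < t → n ≤ t - s) →
      ∃ ℓ : ℕ, ∀ s ∈ S, T^[s + ℓ] x ∈ V

/-- `F` is an independence set for the pair `(U₀, U₁)`. -/
def IndepSet {X : Type} (T : X → X) (U₀ U₁ : Set X) (F : Set ℕ) : Prop :=
  ∀ J : Finset ℕ, ↑J ⊆ F → J.Nonempty → ∀ s : ℕ → Bool,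
    (⋂ j ∈ J, T^[j] ⁻¹' (if s j then U₁ else U₀)).Nonempty


/-!
Write `L₀ = 1` and `L_{k+1} = e_k + L_k`, where `e_k ≥ L_k` is the first position at which `F`
contains a run of length `L_k`. We build `z : ℕ → Bool` with `z 0 = true` by tiling
`[1, ∞)` with atoms: an atom starting at `e ∈ F` is a copy of the prefix `z[0, L_j)` for the
largest `j` with `L_j ≤ e` and `[e, e + L_j) ⊆ F`, any other atom is a single `false`. Then
`z` is supported in `F`, every `L_k` is an atom boundary, and the atom at `e_k` is a copy of
`z[0, L_k)`. As `F` is thickly syndetic, runs of length `L_j` in `F` start syndetically; an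
atom meeting such a start is at least that long, so it begins with `z[0, L_j)`. Descending into
long atoms, this shows that each prefix of `z` occurs syndetically, so `z` is uniformly
recurrent for the shift and its orbit closure is a minimal system; take `V = {w | w 0 = true}`.

Notation: `L_k = blockLen F k`, `e_k = nextRunStart F L_k L_k`, the atoms start at the points
`atomSeq F i`, and `z = minimalSeq F`.
-/

theorem Syndetic.mono {S T : Set ℕ} (hST : S ⊆ T) (hS : Syndetic S) : Syndetic T := by
  obtain ⟨N, hN⟩ := hS
  exact ⟨N, fun m => (hN m).imp fun _ ⟨hk, h⟩ => ⟨hST hk, h⟩⟩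

def runStarts (F : Set ℕ) (n : ℕ) : Set ℕ := {m | ∀ i < n, m + i ∈ F}

section Runs

variable {F : Set ℕ}

theorem runStarts_anti {m n : ℕ} (h : m ≤ n) : runStarts F n ⊆ runStarts F m :=
  fun _ hd i hi => hd i (hi.trans_le h)

theorem mem_of_mem_runStarts {n d : ℕ} (hd : d ∈ runStarts F n) (hn : 0 < n) : d ∈ F := by
  simpa using hd 0 hn

theorem mem_runStarts_one {d : ℕ} (hd : d ∈ F) : d ∈ runStarts F 1 := by
  intro i hi
  simpa [Nat.lt_one_iff.mp hi] using hd

theorem mem_runStarts_of_overlap {a b r t : ℕ} (ha : a ∈ runStarts F r)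
    (hb : b ∈ runStarts F t) (hba : b ≤ a + r) : a ∈ runStarts F (b + t - a) := by
  intro i hi
  by_cases hc : a + i < b
  · exact ha i (by omega)
  · simpa [show b + (a + i - b) = a + i by omega] using hb (a + i - b) (by omega)

theorem ThicklySyndetic.syndetic_runStarts (hF : ThicklySyndetic F) (n : ℕ) :
    Syndetic (runStarts F n) := by
  -- otherwise `(runStarts F n)ᶜ` is thick and meets the syndetic set `Fᶜ ∪ runStarts F n`
  -- only outside `F`
  by_contra hD
  have hsyn : Syndetic (Fᶜ ∪ runStarts F n) := by
    refine ⟨n, fun m => ?_⟩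
    by_cases hm : m ∈ runStarts F n
    · exact ⟨m, Or.inr hm, le_rfl, by omega⟩
    · obtain ⟨i, hi, hiF⟩ : ∃ i < n, m + i ∉ F := by simpa [runStarts] using hm
      exact ⟨m + i, Or.inl hiF, by omega, by omega⟩
  have hthick : Thick (runStarts F n)ᶜ := by
    intro k
    simp only [Syndetic] at hD
    push Not at hD
    obtain ⟨m, hm⟩ := hD k
    refine ⟨m, fun i hi hmi => ?_⟩
    have := hm (m + i) hmi (by omega)
    omega
  obtain ⟨x, hxF, hx, hx'⟩ := hF _ ⟨_, _, hsyn, hthick, rfl⟩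
  exact hx.elim (· hxF) hx'

end Runs

noncomputable def nextRunStart (F : Set ℕ) (n m : ℕ) : ℕ :=
  sInf {d | m ≤ d ∧ d ∈ runStarts F n}

noncomputable def blockLen (F : Set ℕ) : ℕ → ℕ
  | 0 => 1
  | k + 1 => nextRunStart F (blockLen F k) (blockLen F k) + blockLen F k

open Classical in
noncomputable def level (F : Set ℕ) (e : ℕ) : ℕ :=
  Nat.findGreatest (fun j => blockLen F j ≤ e ∧ e ∈ runStarts F (blockLen F j)) e

open Classical in
noncomputable def atomLen (F : Set ℕ) (e : ℕ) : ℕ :=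
  if e ∈ F then blockLen F (level F e) else 1

noncomputable def atomSeq (F : Set ℕ) : ℕ → ℕ
  | 0 => 1
  | i + 1 => atomSeq F i + atomLen F (atomSeq F i)

noncomputable def atomStart (F : Set ℕ) (q : ℕ) : ℕ :=
  atomSeq F (Nat.findGreatest (fun i => atomSeq F i ≤ q) q)

section Atoms

variable {F : Set ℕ}

theorem nextRunStart_le {n m d : ℕ} (hmd : m ≤ d) (hd : d ∈ runStarts F n) :
    nextRunStart F n m ≤ d :=
  Nat.sInf_le ⟨hmd, hd⟩

theorem ThicklySyndetic.nextRunStart_spec (hF : ThicklySyndetic F) (n m : ℕ) :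
    m ≤ nextRunStart F n m ∧ nextRunStart F n m ∈ runStarts F n := by
  obtain ⟨N, hN⟩ := hF.syndetic_runStarts n
  obtain ⟨d, hd, hmd, -⟩ := hN m
  exact Nat.sInf_mem (⟨d, hmd, hd⟩ : {d | m ≤ d ∧ d ∈ runStarts F n}.Nonempty)

theorem blockLen_succ (k : ℕ) :
    blockLen F (k + 1) = nextRunStart F (blockLen F k) (blockLen F k) + blockLen F k := rfl

theorem one_le_blockLen (k : ℕ) : 1 ≤ blockLen F k := by
  induction k with
  | zero => exact le_rfl
  | succ k ih => rw [blockLen_succ]; omega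

theorem blockLen_strictMono (hF : ThicklySyndetic F) : StrictMono (blockLen F) :=
  strictMono_nat_of_lt_succ fun k => by
    have := (hF.nextRunStart_spec (blockLen F k) (blockLen F k)).1
    have := one_le_blockLen (F := F) k
    rw [blockLen_succ]
    omega

open Classical in
theorem level_spec {e : ℕ} (he1 : 1 ≤ e) (he : e ∈ F) :
    blockLen F (level F e) ≤ e ∧ e ∈ runStarts F (blockLen F (level F e)) := by
  unfold level
  exact Nat.findGreatest_spec (P := fun j => blockLen F j ≤ e ∧ e ∈ runStarts F (blockLen F j))
    (Nat.zero_le e) ⟨he1, mem_runStarts_one he⟩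

open Classical in
theorem le_level (hF : ThicklySyndetic F) {j e : ℕ} (hj : blockLen F j ≤ e)
    (he : e ∈ runStarts F (blockLen F j)) : j ≤ level F e := by
  unfold level
  exact Nat.le_findGreatest ((blockLen_strictMono hF).le_apply.trans hj) ⟨hj, he⟩

theorem atomLen_of_mem {e : ℕ} (he : e ∈ F) : atomLen F e = blockLen F (level F e) :=
  if_pos he

theorem atomLen_of_notMem {e : ℕ} (he : e ∉ F) : atomLen F e = 1 :=
  if_neg he

theorem one_le_atomLen (e : ℕ) : 1 ≤ atomLen F e := by
  unfold atomLen
  split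
  · exact one_le_blockLen _
  · exact le_rfl

theorem mem_runStarts_atomLen {e : ℕ} (he1 : 1 ≤ e) (he : e ∈ F) :
    e ∈ runStarts F (atomLen F e) := by
  rw [atomLen_of_mem he]
  exact (level_spec he1 he).2

/-- The run of `F` at the atom start `p` overlaps the run at `d`, so together they cover
`[p, p + L_j)`. -/
theorem blockLen_le_atomLen (hF : ThicklySyndetic F) {j p d : ℕ} (hjp : blockLen F j ≤ p)
    (hpd : p ≤ d) (hdp : d < p + atomLen F p) (hd : d ∈ runStarts F (blockLen F j)) :
    p ∈ runStarts F (blockLen F j) ∧ blockLen F j ≤ atomLen F p := by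
  have hp1 : 1 ≤ p := (one_le_blockLen j).trans hjp
  by_cases hpF : p ∈ F
  · have hp : p ∈ runStarts F (blockLen F j) :=
      runStarts_anti (by omega)
        (mem_runStarts_of_overlap (mem_runStarts_atomLen hp1 hpF) hd hdp.le)
    refine ⟨hp, ?_⟩
    rw [atomLen_of_mem hpF]
    exact (blockLen_strictMono hF).monotone (le_level hF hjp hp)
  · rw [atomLen_of_notMem hpF] at hdp
    obtain rfl : p = d := by omega
    exact absurd (mem_of_mem_runStarts hd (one_le_blockLen j)) hpF

theorem atomSeq_succ (i : ℕ) : atomSeq F (i + 1) = atomSeq F i + atomLen F (atomSeq F i) := rfl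

theorem atomSeq_strictMono : StrictMono (atomSeq F) :=
  strictMono_nat_of_lt_succ fun i => by
    have := one_le_atomLen (F := F) (atomSeq F i)
    rw [atomSeq_succ]
    omega

theorem one_le_atomSeq (i : ℕ) : 1 ≤ atomSeq F i :=
  atomSeq_strictMono.monotone (Nat.zero_le i)

theorem atomSeq_succ_le_of_lt {i b : ℕ} (hb : b ∈ range (atomSeq F)) (hib : atomSeq F i < b) :
    atomSeq F (i + 1) ≤ b := by
  obtain ⟨i', rfl⟩ := hb
  exact atomSeq_strictMono.monotone (atomSeq_strictMono.lt_iff_lt.mp hib)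

theorem atomStart_eq {i q : ℕ} (h1 : atomSeq F i ≤ q) (h2 : q < atomSeq F (i + 1)) :
    atomStart F q = atomSeq F i := by
  set g := Nat.findGreatest (fun i => atomSeq F i ≤ q) q
  have hig : i ≤ g := Nat.le_findGreatest (atomSeq_strictMono.le_apply.trans h1) h1
  have hg : atomSeq F g ≤ q := Nat.findGreatest_spec (P := fun i => atomSeq F i ≤ q)
    (atomSeq_strictMono.le_apply.trans h1) h1
  obtain rfl : g = i := by
    by_contra hne
    have := (atomSeq_strictMono (F := F)).monotone (show i + 1 ≤ g by omega)
    omega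
  rfl

theorem exists_atomSeq_le_lt {q : ℕ} (hq : 1 ≤ q) :
    ∃ i, atomSeq F i ≤ q ∧ q < atomSeq F (i + 1) := by
  set g := Nat.findGreatest (fun i => atomSeq F i ≤ q) q
  have hg : atomSeq F g ≤ q :=
    Nat.findGreatest_spec (P := fun i => atomSeq F i ≤ q) (Nat.zero_le q) hq
  refine ⟨g, hg, not_le.mp fun hg' => ?_⟩
  have := Nat.le_findGreatest (P := fun i => atomSeq F i ≤ q)
    (atomSeq_strictMono.le_apply.trans hg') hg'
  omega

theorem one_le_atomStart (q : ℕ) : 1 ≤ atomStart F q := one_le_atomSeq _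

end Atoms

open Classical in
noncomputable def minimalSeq (F : Set ℕ) : ℕ → Bool
  | 0 => true
  | q + 1 =>
      if atomStart F (q + 1) ∈ F then minimalSeq F (q + 1 - atomStart F (q + 1)) else false
decreasing_by exact Nat.sub_lt (Nat.succ_pos _) (one_le_atomStart _)

def OccursAt {α : Type} (z : ℕ → α) (n q : ℕ) : Prop := ∀ i < n, z (q + i) = z i

section Sequence

variable {F : Set ℕ}

theorem minimalSeq_zero : minimalSeq F 0 = true := by
  rw [minimalSeq]

open Classical in
theorem minimalSeq_of_pos {q : ℕ} (hq : 1 ≤ q) :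
    minimalSeq F q = if atomStart F q ∈ F then minimalSeq F (q - atomStart F q) else false := by
  obtain ⟨q, rfl⟩ := Nat.exists_eq_add_of_le' hq
  rw [minimalSeq]

theorem minimalSeq_atomSeq_add {i t : ℕ} (hi : atomSeq F i ∈ F)
    (ht : t < atomLen F (atomSeq F i)) : minimalSeq F (atomSeq F i + t) = minimalSeq F t := by
  have hstart : atomStart F (atomSeq F i + t) = atomSeq F i :=
    atomStart_eq (Nat.le_add_right _ _) (by rw [atomSeq_succ]; omega)
  rw [minimalSeq_of_pos (by have := one_le_atomSeq (F := F) i; omega), hstart, if_pos hi,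
    Nat.add_sub_cancel_left]

theorem mem_of_minimalSeq_eq_true (h0 : 0 ∈ F) {q : ℕ} (hq : minimalSeq F q = true) : q ∈ F := by
  rcases Nat.eq_zero_or_pos q with rfl | hq1
  · exact h0
  obtain ⟨i, hiq, hqi⟩ := exists_atomSeq_le_lt (F := F) hq1
  rw [minimalSeq_of_pos hq1, atomStart_eq hiq hqi] at hq
  by_cases hiF : atomSeq F i ∈ F
  · have := mem_runStarts_atomLen (one_le_atomSeq i) hiF (q - atomSeq F i)
      (by rw [atomSeq_succ] at hqi; omega)
    rwa [Nat.add_sub_cancel' hiq] at this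
  · simp [hiF] at hq

end Sequence

section Recurrence

variable {F : Set ℕ}

theorem level_nextRunStart (hF : ThicklySyndetic F) (k : ℕ) :
    level F (nextRunStart F (blockLen F k) (blockLen F k)) = k := by
  obtain ⟨hke, he⟩ := hF.nextRunStart_spec (blockLen F k) (blockLen F k)
  have hk1 := one_le_blockLen (F := F) k
  have hle := le_level hF hke he
  have hspec := (level_spec (hk1.trans hke) (mem_of_mem_runStarts he hk1)).1
  have : level F (nextRunStart F (blockLen F k) (blockLen F k)) < k + 1 :=
    (blockLen_strictMono hF).lt_iff_lt.mp (by rw [blockLen_succ]; omega)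
  omega

theorem atomLen_nextRunStart (hF : ThicklySyndetic F) (k : ℕ) :
    atomLen F (nextRunStart F (blockLen F k) (blockLen F k)) = blockLen F k := by
  rw [atomLen_of_mem (mem_of_mem_runStarts (hF.nextRunStart_spec _ _).2 (one_le_blockLen k)),
    level_nextRunStart hF k]

/-- An atom straddling `e_k` would start a run of length `L_k` in `[L_k, e_k)`. -/
theorem exists_atomSeq_eq_nextRunStart (hF : ThicklySyndetic F) {k i : ℕ}
    (hi : atomSeq F i = blockLen F k) :
    ∃ i', atomSeq F i' = nextRunStart F (blockLen F k) (blockLen F k) ∧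
      atomSeq F (i' + 1) = blockLen F (k + 1) := by
  obtain ⟨hke, he⟩ := hF.nextRunStart_spec (blockLen F k) (blockLen F k)
  obtain ⟨i', hi'e, hei'⟩ := exists_atomSeq_le_lt (F := F) ((one_le_blockLen k).trans hke)
  have hii' : blockLen F k ≤ atomSeq F i' := by
    rw [← hi]
    exact atomSeq_strictMono.monotone
      (Nat.lt_succ_iff.mp (atomSeq_strictMono.lt_iff_lt.mp (hi ▸ hke.trans_lt hei')))
  rw [atomSeq_succ] at hei'
  have heq : atomSeq F i' = nextRunStart F (blockLen F k) (blockLen F k) :=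
    hi'e.antisymm (nextRunStart_le hii' (blockLen_le_atomLen hF hii' hi'e hei' he).1)
  refine ⟨i', heq, ?_⟩
  rw [atomSeq_succ, heq, atomLen_nextRunStart hF, blockLen_succ]

theorem blockLen_mem_range_atomSeq (hF : ThicklySyndetic F) (k : ℕ) :
    blockLen F k ∈ range (atomSeq F) := by
  induction k with
  | zero => exact ⟨0, rfl⟩
  | succ k ih =>
    obtain ⟨i, hi⟩ := ih
    obtain ⟨i', -, h⟩ := exists_atomSeq_eq_nextRunStart hF hi
    exact ⟨i' + 1, h⟩

theorem atomSeq_succ_le_nextRunStart (hF : ThicklySyndetic F) {k i : ℕ}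
    (hik : atomSeq F i < blockLen F (k + 1))
    (hne : atomSeq F i ≠ nextRunStart F (blockLen F k) (blockLen F k)) :
    atomSeq F (i + 1) ≤ nextRunStart F (blockLen F k) (blockLen F k) := by
  obtain ⟨i₀, hi₀⟩ := blockLen_mem_range_atomSeq hF k
  obtain ⟨i', hi'e, hi'k⟩ := exists_atomSeq_eq_nextRunStart hF hi₀
  refine atomSeq_succ_le_of_lt ⟨i', hi'e⟩ (lt_of_le_of_ne (not_lt.mp fun h => ?_) hne)
  have := atomSeq_succ_le_of_lt ⟨i, rfl⟩ (hi'e ▸ h)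
  omega

theorem exists_occursAt_of_mem_runStarts (hF : ThicklySyndetic F) {j m b d : ℕ}
    (hb : b ∈ range (atomSeq F)) (hjb : blockLen F j ≤ b) (hbd : b ≤ d)
    (hdm : d < blockLen F m) (hd : d ∈ runStarts F (blockLen F j)) :
    ∃ q, b ≤ q ∧ q ≤ d ∧ q + blockLen F j ≤ blockLen F m ∧
      OccursAt (minimalSeq F) (blockLen F j) q := by
  obtain ⟨i, hid, hdi⟩ := exists_atomSeq_le_lt (F := F) ((one_le_blockLen j).trans (hjb.trans hbd))
  have hbi : b ≤ atomSeq F i := by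
    by_contra h
    have := atomSeq_succ_le_of_lt hb (not_le.mp h)
    omega
  have hend : atomSeq F (i + 1) ≤ blockLen F m :=
    atomSeq_succ_le_of_lt (blockLen_mem_range_atomSeq hF m) (hid.trans_lt hdm)
  rw [atomSeq_succ] at hdi hend
  obtain ⟨hiR, hjl⟩ := blockLen_le_atomLen hF (hjb.trans hbi) hid hdi hd
  have hiF := mem_of_mem_runStarts hiR (one_le_blockLen j)
  exact ⟨atomSeq F i, hbi, hid, by omega, fun t ht => minimalSeq_atomSeq_add hiF (by omega)⟩

/-- If the atom containing `x` extends past `x + C`, it is a copy of a shorter block and we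
descend into it; otherwise we walk right to the next atom boundary and use the next run of
length `L_j`, at most `N` further. -/
theorem exists_occursAt_near (hF : ThicklySyndetic F) {j N C : ℕ}
    (hN : ∀ m, ∃ d ∈ runStarts F (blockLen F j), m ≤ d ∧ d ≤ m + N) (hC : 1 < C)
    (hroom : ∀ k, C ≤ blockLen F (k + 1) → blockLen F j + N ≤ blockLen F k) (m : ℕ) :
    ∀ x, x + C ≤ blockLen F m → ∃ q, x ≤ q ∧ q ≤ x + C + N ∧
      q + blockLen F j ≤ blockLen F m ∧ OccursAt (minimalSeq F) (blockLen F j) q := by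
  induction m using Nat.strong_induction_on with
  | _ m ih =>
  intro x hx
  obtain _ | k := m
  · simp only [blockLen] at hx
    omega
  have hjk := hroom k (by omega)
  obtain ⟨hke, -⟩ := hF.nextRunStart_spec (blockLen F k) (blockLen F k)
  have hsucc := blockLen_succ (F := F) k
  have hj1 := one_le_blockLen (F := F) j
  have walk : ∀ b ∈ range (atomSeq F), x < b → b ≤ x + C → blockLen F k ≤ b →
      b ≤ nextRunStart F (blockLen F k) (blockLen F k) → ∃ q, x ≤ q ∧ q ≤ x + C + N ∧
        q + blockLen F j ≤ blockLen F (k + 1) ∧ OccursAt (minimalSeq F) (blockLen F j) q := by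
    intro b hb hxb hbx hkb hbe
    obtain ⟨d, hd, hbd, hdb⟩ := hN b
    obtain ⟨q, hbq, hqd, hqm, hocc⟩ :=
      exists_occursAt_of_mem_runStarts (m := k + 1) hF hb (by omega) hbd (by omega) hd
    exact ⟨q, by omega, by omega, hqm, hocc⟩
  rcases le_or_gt (x + C) (blockLen F k) with hxk | hxk
  · obtain ⟨q, hxq, hqx, hqm, hocc⟩ := ih k (by omega) x hxk
    exact ⟨q, hxq, hqx, hqm.trans ((blockLen_strictMono hF).monotone (Nat.le_succ k)), hocc⟩
  obtain hxk' | hkx := lt_or_ge x (blockLen F k)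
  · exact walk _ (blockLen_mem_range_atomSeq hF k) hxk' hxk.le le_rfl hke
  obtain ⟨i, hix, hxi⟩ := exists_atomSeq_le_lt (F := F) ((one_le_blockLen k).trans hkx)
  have hend : atomSeq F (i + 1) ≤ blockLen F (k + 1) :=
    atomSeq_succ_le_of_lt (blockLen_mem_range_atomSeq hF (k + 1)) (by omega)
  rw [atomSeq_succ] at hxi hend
  by_cases hdesc : atomSeq F i ∈ F ∧ x + C ≤ atomSeq F i + atomLen F (atomSeq F i)
  · obtain ⟨hiF, hxC⟩ := hdesc
    have hlev : level F (atomSeq F i) < k + 1 := (blockLen_strictMono hF).lt_iff_lt.mp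
      ((level_spec (one_le_atomSeq i) hiF).1.trans_lt (by omega))
    rw [atomLen_of_mem hiF] at hxC
    obtain ⟨q, hxq, hqx, hqm, hocc⟩ := ih _ hlev (x - atomSeq F i) (by omega)
    refine ⟨atomSeq F i + q, by omega, by omega, by rw [atomLen_of_mem hiF] at hend; omega,
      fun t ht => ?_⟩
    rw [add_assoc, minimalSeq_atomSeq_add hiF (by rw [atomLen_of_mem hiF]; omega), hocc t ht]
  · have hbe := atomSeq_succ_le_nextRunStart hF (by omega) fun h => hdesc
      ⟨h ▸ mem_of_mem_runStarts (hF.nextRunStart_spec _ _).2 (one_le_blockLen k),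
        by rw [h, atomLen_nextRunStart hF]; omega⟩
    rw [atomSeq_succ] at hbe
    have hbx : atomSeq F i + atomLen F (atomSeq F i) ≤ x + C := by
      by_cases hiF : atomSeq F i ∈ F
      · exact (not_le.mp fun h => hdesc ⟨hiF, h⟩).le
      · rw [atomLen_of_notMem hiF]
        omega
    exact walk _ ⟨i + 1, atomSeq_succ i⟩ hxi hbx (by omega) hbe

theorem syndetic_occursAt_minimalSeq (hF : ThicklySyndetic F) (n : ℕ) :
    Syndetic {q | OccursAt (minimalSeq F) n q} := by
  obtain ⟨N, hN⟩ := hF.syndetic_runStarts (blockLen F n)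
  have hmono := blockLen_strictMono hF
  set C := blockLen F (blockLen F n + N) + 1
  have hroom : ∀ k, C ≤ blockLen F (k + 1) → blockLen F n + N ≤ blockLen F k := fun k hk =>
    (Nat.lt_succ_iff.mp (hmono.lt_iff_lt.mp hk)).trans hmono.le_apply
  refine ⟨C + N, fun x => ?_⟩
  obtain ⟨q, hxq, hqx, -, hocc⟩ :=
    exists_occursAt_near hF hN (by have := one_le_blockLen (F := F) (blockLen F n + N); omega)
      hroom (x + C) x hmono.le_apply
  exact ⟨q, fun i hi => hocc i (hi.trans_le hmono.le_apply), hxq, by omega⟩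

end Recurrence

section Minimality

variable {X : Type} [TopologicalSpace X] {T : X → X}

theorem orbitClosure_subset {s : Set X} (hs : IsClosed s) (hT : MapsTo T s s) {x : X}
    (hx : x ∈ s) : orbitClosure T x ⊆ s :=
  closure_minimal (range_subset_iff.2 fun n => hT.iterate n hx) hs

theorem mapsTo_orbitClosure (hT : Continuous T) (x : X) :
    MapsTo T (orbitClosure T x) (orbitClosure T x) := fun _ hy =>
  map_mem_closure hT hy (by
    rintro _ ⟨n, rfl⟩
    exact ⟨n + 1, iterate_succ_apply' T n x⟩)

/-- If `W` is a closed neighbourhood of `x` with return times of gap at most `N`, the closed set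
`⋃_{i ≤ N} T⁻ⁱ W` contains the orbit of `x`, hence its closure. -/
theorem mem_orbitClosure_of_syndetic [RegularSpace X] (hT : Continuous T) {x : X}
    (hx : ∀ U ∈ 𝓝 x, Syndetic (retTimes T x U)) {y : X} (hy : y ∈ orbitClosure T x) :
    x ∈ orbitClosure T y := by
  refine mem_closure_iff_nhds.2 fun U hU => ?_
  obtain ⟨W, hW, hWc, hWU⟩ := exists_mem_nhds_isClosed_subset hU
  obtain ⟨N, hN⟩ := hx W hW
  have hcover : orbitClosure T x ⊆ ⋃ i ∈ Finset.range (N + 1), T^[i] ⁻¹' W := by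
    refine closure_minimal (range_subset_iff.2 fun n => ?_)
      (isClosed_biUnion_finset fun i _ => hWc.preimage (hT.iterate i))
    obtain ⟨k, hk, hnk, hkn⟩ := hN n
    refine mem_iUnion₂.2 ⟨k - n, Finset.mem_range.2 (by omega), ?_⟩
    rwa [mem_preimage, ← iterate_add_apply, Nat.sub_add_cancel hnk]
  obtain ⟨i, -, hi⟩ := mem_iUnion₂.1 (hcover hy)
  exact ⟨T^[i] y, hWU hi, i, rfl⟩

theorem minimalSys_restrict_orbitClosure [RegularSpace X] (hT : Continuous T) {x : X}
    (hx : ∀ U ∈ 𝓝 x, Syndetic (retTimes T x U)) :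
    MinimalSys ((mapsTo_orbitClosure hT x).restrict T _ _) := by
  rintro B ⟨y, hy⟩ hB hBT
  have hBc : IsClosed (((↑) : orbitClosure T x → X) '' B) :=
    isClosed_closure.isClosedMap_subtype_val _ hB
  have hBT' : MapsTo T (((↑) : orbitClosure T x → X) '' B) ((↑) '' B) := by
    rintro _ ⟨z, hz, rfl⟩
    exact ⟨_, hBT hz, rfl⟩
  have hxB := orbitClosure_subset hBc hBT' ⟨y, hy, rfl⟩ (mem_orbitClosure_of_syndetic hT hx y.2)
  refine eq_univ_of_forall fun z => ?_
  obtain ⟨w, hw, hwz⟩ := orbitClosure_subset hBc hBT' hxB z.2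
  exact Subtype.ext hwz ▸ hw

theorem MinimalSys.surjective [CompactSpace X] [T2Space X] (hT : Continuous T)
    (hmin : MinimalSys T) : Surjective T := by
  rcases isEmpty_or_nonempty X with _ | ⟨⟨x⟩⟩
  · exact fun y => isEmptyElim y
  · exact range_eq_univ.1 <| hmin _ ⟨T x, x, rfl⟩ (isCompact_range hT).isClosed
      fun _ _ => mem_range_self _

end Minimality

section Shift

variable {α : Type}

def shift (z : ℕ → α) : ℕ → α := fun i => z (i + 1)

theorem shift_iterate_apply (n : ℕ) (z : ℕ → α) (i : ℕ) : shift^[n] z i = z (i + n) := by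
  induction n generalizing z with
  | zero => rfl
  | succ n ih => rw [iterate_succ_apply, ih]; rfl

theorem continuous_shift [TopologicalSpace α] : Continuous (shift (α := α)) :=
  continuous_pi fun i => continuous_apply (i + 1)

theorem syndetic_retTimes_shift [TopologicalSpace α] [DiscreteTopology α] {z : ℕ → α}
    (hz : ∀ n, Syndetic {q | OccursAt z n q}) : ∀ U ∈ 𝓝 z, Syndetic (retTimes shift z U) := by
  intro U hU
  rw [nhds_pi, Filter.mem_pi] at hU
  obtain ⟨I, hI, V, hV, hVU⟩ := hU
  obtain ⟨b, hb⟩ := hI.bddAbove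
  refine (hz (b + 1)).mono fun q hq => hVU fun i hi => ?_
  rw [shift_iterate_apply, add_comm, hq i (Nat.lt_succ_of_le (hb hi))]
  exact mem_of_mem_nhds (hV i)

end Shift

/-- every thickly syndetic subset of `ℤ₊` containing `0` contains an sm-set. -/
theorem statement_8 (F : Set ℕ) (hF : ThicklySyndetic F) (h0 : (0 : ℕ) ∈ F) :
    ∃ (Y : Type) (_ : MetricSpace Y) (_ : CompactSpace Y) (S : Y → Y),
      Continuous S ∧ Function.Surjective S ∧ MinimalSys S ∧
        ∃ (y : Y) (V : Set Y), IsOpen V ∧ y ∈ V ∧ retTimes S y V ⊆ F := by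
  set z := minimalSeq F
  set Y := orbitClosure shift z
  have hmaps := mapsTo_orbitClosure continuous_shift z
  let _ : MetricSpace Y := TopologicalSpace.metrizableSpaceMetric Y
  have : CompactSpace Y := isCompact_iff_compactSpace.mp isClosed_closure.isCompact
  have hS : Continuous (hmaps.restrict shift Y Y) := continuous_shift.restrict hmaps
  have hmin := minimalSys_restrict_orbitClosure continuous_shift
    (syndetic_retTimes_shift (syndetic_occursAt_minimalSeq hF))
  refine ⟨Y, inferInstance, inferInstance, _, hS, hmin.surjective hS, hmin,
    ⟨z, subset_closure ⟨0, rfl⟩⟩, {w | w.1 0 = true},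
    (isOpen_discrete {true}).preimage (f := fun w : Y => w.1 0)
      (by exact (continuous_apply 0).comp continuous_subtype_val), minimalSeq_zero,
    fun n hn => mem_of_minimalSeq_eq_true h0 ?_⟩
  have h := congrFun (hmaps.coe_iterate_restrict ⟨z, subset_closure ⟨0, rfl⟩⟩ n) 0
  rw [shift_iterate_apply, zero_add] at h
  exact h.symm.trans hn

end PaperFormal
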